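/- Let π be a permutation of {1,…,n} and let c(π) be the number of orbits of π on {1,…,n} (cycles of π, including fixed points). Then the permutation game (I, I^π) has exactly 2^{c(π)} − 1 Nash equilibria. -/

import Mathlib

open Matrix BigOperators

/-- A mixed strategy: nonnegative entries summing to 1. -/
def IsMixed {I : Type*} [Fintype I] (x : I → ℝ) : Prop :=
  (∀ i, 0 ≤ x i) ∧ ∑ i, x i = 1

/-- `(x, y)` is a Nash equilibrium of the bimatrix game `(A, B)`. -/
def IsNash {I J : Type*} [Fintype I] [Fintype J]
    (A B : Matrix I J ℝ) (x : I → ℝ) (y : J → ℝ) : Prop :=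
  IsMixed x ∧ IsMixed y ∧
  (∀ x' : I → ℝ, IsMixed x' → x' ⬝ᵥ (A *ᵥ y) ≤ x ⬝ᵥ (A *ᵥ y)) ∧
  (∀ y' : J → ℝ, IsMixed y' → x ⬝ᵥ (B *ᵥ y') ≤ x ⬝ᵥ (B *ᵥ y))

/-- The matrix `I^π` whose `i`-th row is the transpose of the `π(i)`-th
standard unit vector. -/
def permMatrix {n : ℕ} (π : Equiv.Perm (Fin n)) : Matrix (Fin n) (Fin n) ℝ :=
  Matrix.of fun i j => if j = π i then 1 else 0

/-- The number of orbits of `π` on `{1,…,n}` (cycles of `π`, including fixed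
points): the number of distinct `SameCycle`-classes. -/
noncomputable def numOrbits {n : ℕ} (π : Equiv.Perm (Fin n)) : ℕ :=
  {s : Set (Fin n) | ∃ i, s = {j | π.SameCycle i j}}.ncard

/-! The row player's payoff vector against `y` is `y` itself, and the column player's against `x`
is `x ∘ π⁻¹`; so in an equilibrium `x` is supported where `y` is maximal and `y` where
`x ∘ π⁻¹` is maximal. Hence `supp x ⊆ supp y` and `π⁻¹ (supp y) ⊆ supp x`, and since `π`
permutes a finite set both supports coincide and are `π`-invariant; on this common support both
strategies are constant, i.e. uniform. Conversely the uniform strategy on any nonempty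
`π`-invariant set, played by both players, is an equilibrium. The `π`-invariant sets are the
unions of cycles of `π`, so there are `2 ^ c(π) - 1` nonempty ones. -/

open Equiv

section MixedStrategies

variable {ι : Type*}

noncomputable def uniformStrategy (S : Set ι) : ι → ℝ :=
  S.indicator fun _ => (S.ncard : ℝ)⁻¹

theorem uniformStrategy_le (S : Set ι) (i : ι) : uniformStrategy S i ≤ (S.ncard : ℝ)⁻¹ :=
  Set.indicator_le_self' (fun _ _ => by positivity) i

variable [Fintype ι]

theorem Set.sum_indicator_const {M : Type*} [AddCommMonoid M] (S : Set ι) (c : M) :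
    ∑ i, S.indicator (fun _ => c) i = S.ncard • c := by
  classical
  simp [Set.indicator_apply, Finset.sum_ite, Set.ncard_eq_toFinset_card']

theorem isMixed_single [DecidableEq ι] (k : ι) : IsMixed (Pi.single k (1 : ℝ)) :=
  ⟨fun i => by by_cases h : i = k <;> simp [h], by simp⟩

theorem IsMixed.comp_equiv {x : ι → ℝ} (hx : IsMixed x) (e : ι ≃ ι) : IsMixed (x ∘ e) :=
  ⟨fun i => hx.1 (e i), (e.sum_comp x).trans hx.2⟩

theorem IsMixed.exists_pos {x : ι → ℝ} (hx : IsMixed x) : ∃ i, 0 < x i := by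
  by_contra! h
  have : ∑ i, x i = 0 := Finset.sum_eq_zero fun i _ => le_antisymm (h i) (hx.1 i)
  simp [hx.2] at this

theorem forall_isMixed_dotProduct_le_iff (v : ι → ℝ) (c : ℝ) :
    (∀ x, IsMixed x → x ⬝ᵥ v ≤ c) ↔ ∀ k, v k ≤ c := by
  classical
  refine ⟨fun h k => by simpa using h _ (isMixed_single k), fun h x hx => ?_⟩
  calc x ⬝ᵥ v ≤ ∑ i, x i * c :=
        Finset.sum_le_sum fun i _ => mul_le_mul_of_nonneg_left (h i) (hx.1 i)
    _ = c := by rw [← Finset.sum_mul, hx.2, one_mul]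

theorem IsMixed.dotProduct_eq {x v : ι → ℝ} {c : ℝ} (hx : IsMixed x)
    (hv : ∀ i, x i ≠ 0 → v i = c) : x ⬝ᵥ v = c := by
  calc x ⬝ᵥ v = ∑ i, x i * c :=
        Finset.sum_congr rfl fun i _ => by
          by_cases hi : x i = 0
          · simp [hi]
          · rw [hv i hi]
    _ = c := by rw [← Finset.sum_mul, hx.2, one_mul]

theorem IsMixed.apply_eq_of_dotProduct_eq {x v : ι → ℝ} {c : ℝ} (hx : IsMixed x)
    (hv : ∀ i, v i ≤ c) (hxv : x ⬝ᵥ v = c) {i : ι} (hi : 0 < x i) : v i = c := by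
  have hsum : ∑ j, x j * (c - v j) = 0 := by
    simp only [mul_sub, Finset.sum_sub_distrib, ← Finset.sum_mul, hx.2, one_mul]
    exact sub_eq_zero.2 hxv.symm
  have hterm := (Finset.sum_eq_zero_iff_of_nonneg fun j _ =>
    mul_nonneg (hx.1 j) (sub_nonneg.2 (hv j))).1 hsum i (Finset.mem_univ i)
  have := (mul_eq_zero.1 hterm).resolve_left hi.ne'
  linarith

theorem uniformStrategy_ne_zero_iff {S : Set ι} (hS : S.Nonempty) {i : ι} :
    uniformStrategy S i ≠ 0 ↔ i ∈ S := by
  have : (S.ncard : ℝ) ≠ 0 := by exact_mod_cast hS.ncard_pos.ne'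
  simp [uniformStrategy, this]

theorem isMixed_uniformStrategy {S : Set ι} (hS : S.Nonempty) : IsMixed (uniformStrategy S) :=
  ⟨fun i => Set.indicator_nonneg (fun _ _ => by positivity) i, by
    rw [uniformStrategy, Set.sum_indicator_const, nsmul_eq_mul, mul_inv_cancel₀]
    exact_mod_cast hS.ncard_pos.ne'⟩

theorem dotProduct_self_uniformStrategy {S : Set ι} (hS : S.Nonempty) :
    uniformStrategy S ⬝ᵥ uniformStrategy S = (S.ncard : ℝ)⁻¹ :=
  (isMixed_uniformStrategy hS).dotProduct_eq fun _ hi =>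
    Set.indicator_of_mem ((uniformStrategy_ne_zero_iff hS).1 hi) _

theorem uniformStrategy_injOn : Set.InjOn (uniformStrategy (ι := ι)) {S | S.Nonempty} :=
  fun S hS S' hS' h => Set.ext fun i => by
    rw [← uniformStrategy_ne_zero_iff hS, ← uniformStrategy_ne_zero_iff hS', h]

theorem IsMixed.eq_uniformStrategy {x : ι → ℝ} (hx : IsMixed x) {S : Set ι}
    (hS : ∀ i, 0 < x i ↔ i ∈ S) {c : ℝ} (hc : ∀ i ∈ S, x i = c) : x = uniformStrategy S := by
  have hx_eq : x = S.indicator fun _ => c := funext fun i => by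
    by_cases hi : i ∈ S
    · simp [hi, hc i hi]
    · simpa [hi] using le_antisymm (not_lt.1 ((hS i).not.2 hi)) (hx.1 i)
  have hcard : (S.ncard : ℝ) * c = 1 := by
    rw [← hx.2, hx_eq, Set.sum_indicator_const, nsmul_eq_mul]
  rw [hx_eq, uniformStrategy, eq_inv_of_mul_eq_one_right hcard]

end MixedStrategies

section Permutations

variable {α : Type*}

theorem Equiv.Perm.SameCycle.mem_iff_of_preimage_eq {π : Perm α} {S : Set α}
    (hS : π ⁻¹' S = S) {i j : α} (h : π.SameCycle i j) : i ∈ S ↔ j ∈ S := by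
  have step : ∀ k, π k ∈ S ↔ k ∈ S := fun k => by rw [← Set.mem_preimage, hS]
  obtain ⟨m, rfl⟩ := h
  induction m using Int.induction_on with
  | zero => rfl
  | succ m ih => rwa [add_comm, _root_.zpow_one_add, Perm.mul_apply, step]
  | pred m ih =>
    rwa [sub_eq_neg_add, _root_.zpow_add, _root_.zpow_neg_one, Perm.mul_apply, ← step (π⁻¹ _),
      Perm.inv_def, apply_symm_apply]

theorem Equiv.Perm.preimage_eq_of_preimage_subset [Finite α] (π : Perm α) {T : Set α}
    (h : π ⁻¹' T ⊆ T) : π ⁻¹' T = T := by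
  rw [← π.image_symm_eq_preimage] at h ⊢
  exact Set.map_eq_of_subset (f := π.symm.toEmbedding) h

theorem Set.ncard_setOf_nonempty (β : Type*) [Finite β] :
    {T : Set β | T.Nonempty}.ncard = 2 ^ Nat.card β - 1 := by
  have : Fintype β := Fintype.ofFinite β
  have hcompl : {T : Set β | T.Nonempty} = Set.univ \ {∅} := by
    ext T
    simp [Set.nonempty_iff_ne_empty]
  rw [hcompl, Set.ncard_sdiff (Set.subset_univ _), Set.ncard_univ, Set.ncard_singleton,
    Nat.card_eq_fintype_card, Fintype.card_set, Nat.card_eq_fintype_card]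

theorem Equiv.Perm.ncard_setOf_nonempty_preimage_eq [Finite α] (π : Perm α) :
    {S : Set α | S.Nonempty ∧ π ⁻¹' S = S}.ncard =
      2 ^ Nat.card (Quotient (Perm.SameCycle.setoid π)) - 1 := by
  let mk : α → Quotient (Perm.SameCycle.setoid π) := Quotient.mk _
  have hmk : Function.Surjective mk := Quotient.mk_surjective
  have hsat : ∀ S : Set α, π ⁻¹' S = S → mk ⁻¹' (mk '' S) = S := fun S hS =>
    Set.Subset.antisymm
      (fun j ⟨i, hi, hij⟩ => ((Perm.SameCycle.mem_iff_of_preimage_eq hS) (Quotient.exact hij)).1 hi)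
      (Set.subset_preimage_image mk S)
  have himage : {S : Set α | S.Nonempty ∧ π ⁻¹' S = S} =
      Set.preimage mk '' {T | T.Nonempty} := by
    ext S
    constructor
    · rintro ⟨hne, hS⟩
      exact ⟨mk '' S, hne.image mk, hsat S hS⟩
    · rintro ⟨T, hT, rfl⟩
      refine ⟨hT.preimage hmk, Set.ext fun i => ?_⟩
      have hcycle : mk (π i) = mk i := Quotient.sound (Perm.sameCycle_apply_left.2 .rfl)
      exact Iff.of_eq (congrArg (· ∈ T) hcycle)
  rw [himage, Set.ncard_image_of_injective _ (Set.preimage_injective.2 hmk),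
    Set.ncard_setOf_nonempty]

end Permutations

variable {n : ℕ}

theorem numOrbits_eq_card_quotient (π : Perm (Fin n)) :
    numOrbits π = Nat.card (Quotient (Perm.SameCycle.setoid π)) := by
  have hclasses : {s : Set (Fin n) | ∃ i, s = {j | π.SameCycle i j}} =
      (Perm.SameCycle.setoid π).classes := by
    refine Set.ext fun s => exists_congr fun i => ?_
    rw [show {j | π.SameCycle i j} = {j | Perm.SameCycle.setoid π j i} from
      Set.ext fun _ => Perm.sameCycle_comm]
  rw [numOrbits, hclasses, ← Nat.card_coe_set_eq,
    Nat.card_congr (Setoid.quotientEquivClasses _).symm]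

theorem permMatrix_mulVec (π : Perm (Fin n)) (y : Fin n → ℝ) : permMatrix π *ᵥ y = y ∘ π := by
  ext i
  simp [permMatrix, Matrix.mulVec, dotProduct]

theorem isNash_permMatrix_iff {π : Perm (Fin n)} {x y : Fin n → ℝ} :
    IsNash 1 (permMatrix π) x y ↔
      IsMixed x ∧ IsMixed y ∧ (∀ k, y k ≤ x ⬝ᵥ y) ∧ (∀ k, x k ≤ x ⬝ᵥ (y ∘ π)) := by
  have hcol : (∀ y', IsMixed y' → x ⬝ᵥ (y' ∘ π) ≤ x ⬝ᵥ (y ∘ π)) ↔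
      ∀ k, x k ≤ x ⬝ᵥ (y ∘ π) := by
    simp_rw [dotProduct_comm x, ← dotProduct_comp_equiv_symm]
    rw [forall_isMixed_dotProduct_le_iff, ← π.forall_congr_right]
    simp
  simp only [IsNash, Matrix.one_mulVec, permMatrix_mulVec, forall_isMixed_dotProduct_le_iff, hcol]

theorem isNash_uniformStrategy {π : Perm (Fin n)} {S : Set (Fin n)} (hS : S.Nonempty)
    (hπS : π ⁻¹' S = S) : IsNash 1 (permMatrix π) (uniformStrategy S) (uniformStrategy S) := by
  have hinv : uniformStrategy S ∘ π = uniformStrategy S := funext fun i => by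
    have hi : π i ∈ S ↔ i ∈ S := by rw [← Set.mem_preimage, hπS]
    by_cases h : i ∈ S <;> simp [uniformStrategy, h, hi]
  have hmax : ∀ k, uniformStrategy S k ≤ uniformStrategy S ⬝ᵥ uniformStrategy S := fun k => by
    rw [dotProduct_self_uniformStrategy hS]
    exact uniformStrategy_le S k
  exact isNash_permMatrix_iff.2
    ⟨isMixed_uniformStrategy hS, isMixed_uniformStrategy hS, hmax, by rwa [hinv]⟩

theorem IsNash.exists_eq_uniformStrategy {π : Perm (Fin n)} {x y : Fin n → ℝ}
    (h : IsNash 1 (permMatrix π) x y) :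
    ∃ S : Set (Fin n),
      S.Nonempty ∧ π ⁻¹' S = S ∧ x = uniformStrategy S ∧ y = uniformStrategy S := by
  obtain ⟨hx, hy, hyv, hxw⟩ := isNash_permMatrix_iff.1 h
  have hy_eq : ∀ i, 0 < x i → y i = x ⬝ᵥ y := fun i => hx.apply_eq_of_dotProduct_eq hyv rfl
  have hx_eq : ∀ i, 0 < y (π i) → x i = x ⬝ᵥ (y ∘ π) := fun i =>
    (hy.comp_equiv π).apply_eq_of_dotProduct_eq hxw (dotProduct_comm _ _)
  have hv : 0 < x ⬝ᵥ y := by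
    obtain ⟨j, hj⟩ := hy.exists_pos
    exact hj.trans_le (hyv j)
  have hw : 0 < x ⬝ᵥ (y ∘ π) := by
    obtain ⟨i, hi⟩ := hx.exists_pos
    exact hi.trans_le (hxw i)
  set S := {i | 0 < x i}
  set T := {i | 0 < y i}
  have hST : S ⊆ T := fun i hi => by
    show 0 < y i
    rwa [hy_eq i hi]
  have hTS : π ⁻¹' T ⊆ S := fun i hi => by
    show 0 < x i
    rwa [hx_eq i hi]
  have hT : π ⁻¹' T = T := π.preimage_eq_of_preimage_subset (hTS.trans hST)
  have hSeqT : S = T := hST.antisymm (hT ▸ hTS)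
  exact ⟨S, hx.exists_pos, hSeqT ▸ hT,
    hx.eq_uniformStrategy (fun _ => Iff.rfl) fun i hi => hx_eq i (hT.symm.subset (hST hi)),
    hy.eq_uniformStrategy (fun i => (Set.ext_iff.1 hSeqT i).symm) hy_eq⟩

/-- The permutation game `(I, I^π)` has exactly `2^{c(π)} − 1` Nash equilibria,
where `c(π)` is the number of orbits of `π`. -/
theorem stmt7 {n : ℕ} (π : Equiv.Perm (Fin n)) :
    {p : (Fin n → ℝ) × (Fin n → ℝ) |
        IsNash (1 : Matrix (Fin n) (Fin n) ℝ) (permMatrix π) p.1 p.2}.ncard =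
      2 ^ numOrbits π - 1 := by
  have hnash : {p : (Fin n → ℝ) × (Fin n → ℝ) | IsNash 1 (permMatrix π) p.1 p.2} =
      (fun S => (uniformStrategy S, uniformStrategy S)) ''
        {S : Set (Fin n) | S.Nonempty ∧ π ⁻¹' S = S} := by
    ext ⟨x, y⟩
    constructor
    · intro h
      obtain ⟨S, hS, hπS, rfl, rfl⟩ := IsNash.exists_eq_uniformStrategy h
      exact ⟨S, ⟨hS, hπS⟩, rfl⟩
    · rintro ⟨S, ⟨hS, hπS⟩, hxy⟩
      cases hxy
      exact isNash_uniformStrategy hS hπS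
  have hinj : Set.InjOn (fun S => (uniformStrategy S, uniformStrategy S))
      {S : Set (Fin n) | S.Nonempty ∧ π ⁻¹' S = S} := fun S hS S' hS' h =>
    uniformStrategy_injOn hS.1 hS'.1 (congrArg Prod.fst h)
  rw [hnash, hinj.ncard_image, π.ncard_setOf_nonempty_preimage_eq, numOrbits_eq_card_quotient]
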